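/- arXiv:2405.08165 — 2 statements merged into one kernel-verified Lean document; each statement's English description precedes it below -/
import Mathlib

section
/- For any a0, a4 ∈ ℂ, the quadric hypersurface in P⁴ defined by a0·f0 + a4·f4 = 0 is singular; concretely, the determinant of the associated symmetric 5×5 matrix of the quadratic form a0(x3² − x2x4) + a4(x1² − x0x2) is zero. -/
open Matrix

theorem quadric_f0_f4_singular (a0 a4 : ℂ) :
    (∀ x : Fin 5 → ℂ,
      x ⬝ᵥ ((!![0, 0, -a4/2, 0, 0;
                0, a4, 0, 0, 0;
                -a4/2, 0, 0, 0, -a0/2;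
                0, 0, 0, a0, 0;
                0, 0, -a0/2, 0, 0] : Matrix (Fin 5) (Fin 5) ℂ) *ᵥ x)
        = a0 * ((x 3)^2 - (x 2)*(x 4)) + a4 * ((x 1)^2 - (x 0)*(x 2))) ∧
    (!![0, 0, -a4/2, 0, 0;
       0, a4, 0, 0, 0;
       -a4/2, 0, 0, 0, -a0/2;
       0, 0, 0, a0, 0;
       0, 0, -a0/2, 0, 0] : Matrix (Fin 5) (Fin 5) ℂ).det = 0 := by
  constructor
  · intro x
    simp [dotProduct, mulVec, Fin.sum_univ_five, Matrix.vecHead, Matrix.vecTail]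
    ring
  · simp [Matrix.det_succ_row_zero, Fin.sum_univ_succ, Matrix.vecHead, Matrix.vecTail, Fin.succAbove]
end

section
/- Let s ∈ ℂ and define the quadratic form F = (1−4s²)·f2 + f5, and the map τ : ℂ⁵ → ℂ⁵ by τ(x0,...,x4) = (f4, s·f3, s²·f2, s·f1, f0). Then for every point x = (x0,...,x4) with F(x) = 0, the composite τ(τ(x)) is a scalar multiple of x; more precisely there exists a polynomial λ(x) (a product of quadratic forms vanishing only along the base locus) such that τ(τ(x)) = λ(x)·x modulo the ideal generated by F. Hence τ induces a birational involution of the quadric Q = {F = 0} ⊂ P⁴ that is the identity on Q ∖ C₄. -/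
/-!
The map `τ` is quadratic, so `τ ∘ τ` is given by quartics; each coordinate of `τ(τ(x))` equals
`λ(x) xᵢ` plus an explicit quadratic multiple of the form `F` defining `Q`. Hence on `Q` the
composite is scalar multiplication by the cubic `λ`.
-/

/-- τ : ℂ⁵ → ℂ⁵, x ↦ (f4, s·f3, s²·f2, s·f1, f0). -/
noncomputable def tauMap (s : ℂ) (x : Fin 5 → ℂ) : Fin 5 → ℂ :=
  ![ (x 1)^2 - (x 0)*(x 2),
     s * ((x 1)*(x 2) - (x 0)*(x 3)),
     s^2 * ((x 2)^2 - (x 0)*(x 4)),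
     s * ((x 2)*(x 3) - (x 1)*(x 4)),
     (x 3)^2 - (x 2)*(x 4) ]

namespace TauInvolution

/-- The form `(1 - 4s²) f2 + f5` cutting out the quadric `Q`. -/
def quadricForm (s : ℂ) (x : Fin 5 → ℂ) : ℂ :=
  (1 - 4*s^2) * ((x 2)^2 - (x 0)*(x 4)) + (3*(x 2)^2 - 4*(x 1)*(x 3) + (x 0)*(x 4))

def multiplier (s : ℂ) (x : Fin 5 → ℂ) : ℂ :=
  s^2 * ((x 0)*(x 3)^2 + (x 1)^2*(x 4) - (x 2)^3 - (x 0)*(x 2)*(x 4))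
    + 2*s^4 * (x 2) * ((x 2)^2 - (x 0)*(x 4))

noncomputable def cofactor (s : ℂ) (x : Fin 5 → ℂ) : Fin 5 → ℂ :=
  (s^2 / 4) • ![ 2*(x 0)*(x 2),
                 (x 1)*(x 2) + (x 0)*(x 3),
                 (x 2)^2 + (x 1)*(x 3) - s^2 * ((x 2)^2 - (x 0)*(x 4)),
                 (x 2)*(x 3) + (x 1)*(x 4),
                 2*(x 2)*(x 4) ]

theorem tauMap_tauMap (s : ℂ) (x : Fin 5 → ℂ) :
    tauMap s (tauMap s x) = multiplier s x • x + quadricForm s x • cofactor s x := by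
  ext i
  fin_cases i <;>
    simp only [tauMap, multiplier, quadricForm, cofactor, Fin.isValue, Matrix.cons_val_zero,
      Matrix.cons_val_one, Matrix.cons_val, Fin.zero_eta, Fin.mk_one, Fin.reduceFinMk,
      Nat.succ_eq_add_one, Nat.reduceAdd, Matrix.smul_cons, Matrix.smul_empty, smul_eq_mul,
      Pi.add_apply, Pi.smul_apply] <;>
    ring

end TauInvolution

theorem tau_involution (s : ℂ) :
    ∃ lam : (Fin 5 → ℂ) → ℂ,
      ∀ x : Fin 5 → ℂ,
        (1 - 4*s^2) * ((x 2)^2 - (x 0)*(x 4)) + (3*(x 2)^2 - 4*(x 1)*(x 3) + (x 0)*(x 4)) = 0 →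
        tauMap s (tauMap s x) = lam x • x := by
  refine ⟨TauInvolution.multiplier s, fun x hx => ?_⟩
  have hQ : TauInvolution.quadricForm s x = 0 := hx
  rw [TauInvolution.tauMap_tauMap, hQ, zero_smul, add_zero]
end
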